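/- arXiv:2107.07726 — 2 statements merged into one kernel-verified Lean document; each statement's English description precedes it below -/
import Mathlib

section
/- Let X be a measurable space, X_• := X ⊕ PUnit the disjoint sum measurable space, and !X := Σ_{k∈ℕ} X^{(k)} the countable disjoint union of the symmetric powers of X. For each n, the map r_n : X_•^{(n)} → X_•^{(n+1)}, which adds one copy of the root inr(*) to an unordered n-tuple, and the map h_n : X_•^{(n)} → !X, which sends the class of a tuple whose entries of the form inl(x) are exactly x_1,…,x_k to ⟨k, class of (x_1,…,x_k)⟩, are measurable. For every measurable space Y and every family (τ_n) of s-finite transition kernels from X_•^{(n)} to Y satisfying the cone condition τ_{n+1}(r_n(m), ·) = τ_n(m, ·) for all n and all m ∈ X_•^{(n)}, there exists a unique transition kernel τ from !X to Y such that τ(h_n(m), ·) = τ_n(m, ·) for all n and m; moreover this τ is s-finite. Hence !X, with the deterministic kernels of the maps h_n, is the limit of the sequential diagram of rooted symmetric powers in the opposite category of s-finite transition kernels. -/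
/-!
Up to permutation, every point of `X_•^{(n)}` is `(inl y₁, …, inl y_k, *, …, *)` with `k ≤ n`,
and iterating the cone condition along the root-adding maps shows that `τ_n` takes the same
value there as `τ_k` at `(inl y₁, …, inl y_k)`. So the mediating kernel is forced to be
`⟨k, m⟩ ↦ τ_k (inl_* m)`, and this formula does define a kernel: it is measurable component by
component, and it is s-finite because it is a countable sum of finite kernels, each supported on
a single component. Measurability of `h_n` comes from splitting the tuples according to which
coordinates lie in `X`: there are finitely many such patterns, each forms a measurable set, and
on each of them `h_n` is a measurable function of the coordinates.
-/

open MeasureTheory ProbabilityTheory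
open scoped ProbabilityTheory

/-- The setoid on `Fin n → X` identifying tuples up to permutation of coordinates. -/
def symSetoid (X : Type*) (n : ℕ) : Setoid (Fin n → X) where
  r x y := ∃ σ : Equiv.Perm (Fin n), x ∘ σ = y
  iseqv := by
    refine ⟨fun x => ⟨1, ?_⟩, ?_, ?_⟩
    · funext i; simp
    · rintro x y ⟨σ, rfl⟩
      exact ⟨σ⁻¹, by funext i; simp⟩
    · rintro x y z ⟨σ, rfl⟩ ⟨τ, rfl⟩
      exact ⟨σ * τ, by funext i; simp [Equiv.Perm.mul_apply]⟩

/-- The symmetric power `X^{(n)}`: the quotient of `Fin n → X` by permutations. -/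
def SymPow (X : Type*) (n : ℕ) : Type _ := Quotient (symSetoid X n)

/-- `X^{(n)}` carries the σ-algebra pushed forward along the quotient map
`F : (Fin n → X) → X^{(n)}`. -/
instance SymPow.instMeasurableSpace (X : Type*) [MeasurableSpace X] (n : ℕ) :
    MeasurableSpace (SymPow X n) :=
  MeasurableSpace.map (Quotient.mk (symSetoid X n)) inferInstance

section Sigma

variable {ι : Type*} {α : ι → Type*} [∀ i, MeasurableSpace (α i)] {β : Type*} [MeasurableSpace β]

theorem measurable_sigmaMk (i : ι) : Measurable (Sigma.mk i : α i → Σ i, α i) :=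
  measurable_iff_le_map.mpr (iInf_le _ i)

theorem measurable_sigma_iff {f : (Σ i, α i) → β} :
    Measurable f ↔ ∀ i, Measurable fun a : α i => f ⟨i, a⟩ :=
  ⟨fun hf i => hf.comp (measurable_sigmaMk i),
    fun hf _ hs => MeasurableSpace.measurableSet_iInf.mpr fun i => hf i hs⟩

namespace ProbabilityTheory.Kernel

noncomputable def sigma (κ : ∀ i, Kernel (α i) β) : Kernel (Σ i, α i) β where
  toFun p := κ p.1 p.2
  measurable' := measurable_sigma_iff.mpr fun i => (κ i).measurable

@[simp]
theorem sigma_apply (κ : ∀ i, Kernel (α i) β) (p : Σ i, α i) : sigma κ p = κ p.1 p.2 := rfl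

instance isFiniteKernel_sigma_single [DecidableEq ι] (i : ι) (η : Kernel (α i) β)
    [IsFiniteKernel η] : IsFiniteKernel (sigma (Pi.single i η)) := by
  refine ⟨⟨η.bound, η.bound_lt_top, fun ⟨j, a⟩ => ?_⟩⟩
  rcases eq_or_ne j i with rfl | hji
  · simpa using η.measure_le_bound a Set.univ
  · simp [Pi.single_eq_of_ne hji]

theorem sigma_eq_sum_single_seq [Countable ι] [DecidableEq ι] (κ : ∀ i, Kernel (α i) β)
    [∀ i, IsSFiniteKernel (κ i)] :
    sigma κ = Kernel.sum fun q : ι × ℕ => sigma (Pi.single q.1 (seq (κ q.1) q.2)) := by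
  ext ⟨i, a⟩ s hs
  rw [sum_apply' _ _ hs, ENNReal.tsum_prod', tsum_eq_single i fun j hji => by
    simp [Pi.single_eq_of_ne' hji]]
  simp only [Pi.single_eq_same, sigma_apply, ← sum_apply' _ _ hs]
  exact congrArg (· a s) (kernel_sum_seq (κ i)).symm

instance isSFiniteKernel_sigma [Countable ι] (κ : ∀ i, Kernel (α i) β)
    [∀ i, IsSFiniteKernel (κ i)] : IsSFiniteKernel (sigma κ) := by
  classical
  rw [sigma_eq_sum_single_seq]
  exact isSFiniteKernel_sum

end ProbabilityTheory.Kernel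

end Sigma

theorem measurable_finSnoc {α : Type*} [MeasurableSpace α] {n : ℕ} (a : α) :
    Measurable fun x : Fin n → α => (Fin.snoc x a : Fin (n + 1) → α) := by
  refine measurable_pi_lambda _ fun i => ?_
  induction i using Fin.lastCases with
  | last => simp
  | cast j => simpa using measurable_pi_apply j

namespace SymPow

variable {X Z : Type*}

theorem mk_comp_perm {n : ℕ} (x : Fin n → X) (σ : Equiv.Perm (Fin n)) :
    Quotient.mk (symSetoid X n) (x ∘ σ) = Quotient.mk _ x :=
  Quotient.sound ⟨σ⁻¹, by ext; simp⟩

def map (f : X → Z) (n : ℕ) : SymPow X n → SymPow Z n :=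
  Quotient.map (f ∘ ·) (by rintro a b ⟨σ, rfl⟩; exact ⟨σ, rfl⟩)

variable [MeasurableSpace X] [MeasurableSpace Z]

theorem measurable_mk (n : ℕ) : Measurable (Quotient.mk (symSetoid X n)) :=
  measurable_quotient_mk''

theorem measurable_iff {n : ℕ} {f : SymPow X n → Z} :
    Measurable f ↔ Measurable fun x => f (Quotient.mk _ x) :=
  measurable_from_quotient

theorem measurable_map {f : X → Z} (hf : Measurable f) (n : ℕ) : Measurable (map f n) :=
  measurable_iff.mpr <| (measurable_mk n).comp <| measurable_pi_lambda _ fun i =>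
    hf.comp (measurable_pi_apply i)

end SymPow

section RootPadded

variable {X : Type*}

def rootPadded (n : ℕ) {k : ℕ} (y : Fin k → X) : Fin n → X ⊕ PUnit :=
  fun i => if hi : (i : ℕ) < k then Sum.inl (y ⟨i, hi⟩) else Sum.inr PUnit.unit

theorem rootPadded_self {k : ℕ} (y : Fin k → X) : rootPadded k y = Sum.inl ∘ y := by
  ext i
  simp [rootPadded]

theorem snoc_rootPadded {n k : ℕ} (hk : k ≤ n) (y : Fin k → X) :
    Fin.snoc (rootPadded n y) (Sum.inr PUnit.unit) = rootPadded (n + 1) y := by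
  ext i
  induction i using Fin.lastCases with
  | last => simp [rootPadded, hk]
  | cast j => simp [rootPadded]

theorem rootPadded_eq_append {n k : ℕ} (hk : k ≤ n) (y : Fin k → X) :
    rootPadded n y = Fin.append (Sum.inl ∘ y) (fun _ : Fin (n - k) => Sum.inr PUnit.unit) ∘
      Fin.cast (by omega) := by
  ext i
  simp only [rootPadded, Fin.append, Function.comp_apply, Fin.addCases, Fin.val_cast,
    Fin.cast_cast, eq_rec_constant]
  rfl

theorem symMk_eq_rootPadded {n k : ℕ} (x : Fin n → X ⊕ PUnit) (e : Fin k ≃ {i // (x i).isLeft})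
    (y : Fin k → X) (hy : ∀ j, x (e j) = Sum.inl (y j)) :
    Quotient.mk (symSetoid _ n) x = Quotient.mk _ (rootPadded n y) := by
  have hk : k ≤ n := by
    simpa using (Fintype.card_congr e).trans_le (Fintype.card_subtype_le _)
  let e' : Fin (n - k) ≃ {i // ¬(x i).isLeft} := (Fintype.equivFinOfCardEq <| by
    rw [Fintype.card_subtype_compl, ← Fintype.card_congr e, Fintype.card_fin, Fintype.card_fin]).symm
  let σ : Equiv.Perm (Fin n) := (finCongr (by omega)).trans
    (finSumFinEquiv.symm.trans ((e.sumCongr e').trans (Equiv.sumCompl _)))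
  suffices x ∘ σ = rootPadded n y by rw [← this, SymPow.mk_comp_perm]
  rw [rootPadded_eq_append hk]
  ext i
  obtain ⟨j, rfl⟩ := (finCongr (by omega : k + (n - k) = n)).surjective i
  induction j using Fin.addCases with
  | left j => simp [σ, hy]
  | right j =>
    obtain ⟨⟨⟩, hv⟩ := Sum.isRight_iff.mp (Sum.not_isLeft.mp (e' j).2)
    simp [σ, hv]

theorem exists_symMk_eq_rootPadded {n : ℕ} (x : Fin n → X ⊕ PUnit) :
    ∃ k ≤ n, ∃ y : Fin k → X, Quotient.mk (symSetoid _ n) x = Quotient.mk _ (rootPadded n y) := by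
  let e := (Fintype.equivFin {i // (x i).isLeft}).symm
  refine ⟨_, (Fintype.card_subtype_le _).trans_eq (Fintype.card_fin n),
    fun j => (x (e j)).getLeft (e j).2, symMk_eq_rootPadded x e _ fun j => ?_⟩
  exact (Sum.inl_getLeft _ _).symm

theorem apply_rootPadded_of_snoc_root {β : Type*} (F : ∀ n, SymPow (X ⊕ PUnit) n → β)
    (hF : ∀ n (x : Fin n → X ⊕ PUnit),
      F (n + 1) (Quotient.mk _ (Fin.snoc x (Sum.inr PUnit.unit))) = F n (Quotient.mk _ x))
    {n k : ℕ} (hk : k ≤ n) (y : Fin k → X) :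
    F n (Quotient.mk _ (rootPadded n y)) = F k (Quotient.mk _ (Sum.inl ∘ y)) := by
  induction n, hk using Nat.le_induction with
  | base => rw [rootPadded_self]
  | succ n hkn ih => rw [← snoc_rootPadded hkn, hF, ih]

theorem measurable_of_apply_rootPadded [MeasurableSpace X] {n : ℕ}
    {f : SymPow (X ⊕ PUnit) n → Σ k, SymPow X k}
    (hf : ∀ k ≤ n, ∀ y : Fin k → X,
      f (Quotient.mk _ (rootPadded n y)) = ⟨k, Quotient.mk _ y⟩) :
    Measurable f := by
  rcases isEmpty_or_nonempty X with hX | ⟨⟨x₀⟩⟩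
  · have : Subsingleton (X ⊕ PUnit) := (Equiv.emptySum X PUnit).subsingleton
    have : Subsingleton (SymPow (X ⊕ PUnit) n) := inferInstanceAs (Subsingleton (Quotient _))
    exact Subsingleton.measurable
  let g (b : Fin n → Bool) (x : Fin n → X ⊕ PUnit) : Σ k, SymPow X k :=
    ⟨_, Quotient.mk _ fun j => (x ((Fintype.equivFin {i // b i}).symm j)).elim id fun _ => x₀⟩
  have hfg (x : Fin n → X ⊕ PUnit) : f (Quotient.mk _ x) = g (fun i => (x i).isLeft) x := by
    rw [symMk_eq_rootPadded x (Fintype.equivFin _).symm _ fun j => ?_,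
      hf _ ((Fintype.card_subtype_le _).trans_eq (Fintype.card_fin n))]
    obtain ⟨a, ha⟩ := Sum.isLeft_iff.mp ((Fintype.equivFin {i // (x i).isLeft}).symm j).2
    simp [ha]
  have hg : Measurable fun p : (Fin n → X ⊕ PUnit) × (Fin n → Bool) => g p.2 p.1 :=
    measurable_from_prod_countable_left fun b => show Measurable (g b) from
      (measurable_sigmaMk _).comp <|
      (SymPow.measurable_mk _).comp <| measurable_pi_lambda _ fun j =>
        (measurable_id.sumElim measurable_const).comp (measurable_pi_apply _)
  have hisLeft : Measurable (Sum.isLeft : X ⊕ PUnit → Bool) :=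
    measurable_const.sumElim measurable_const
  refine SymPow.measurable_iff.mpr ?_
  simp only [hfg]
  exact hg.comp (measurable_id.prodMk (measurable_pi_lambda _ fun i =>
    hisLeft.comp (measurable_pi_apply i)))

end RootPadded

/-- `!X := Σ k, X^{(k)}`, with the maps `h n` (which are measurable, as are
the maps `r n` adding a root to a rooted symmetric power), is the limit of the sequential
diagram of the rooted symmetric powers `(X ⊕ PUnit)^{(n)}` in the opposite category of
s-finite transition kernels: every cone `(τ_n)` of s-finite kernels (i.e. satisfying
`τ_{n+1} ∘ r_n = τ_n` pointwise) factors uniquely through `!X`, and the mediating kernel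
is s-finite. -/
theorem bang_limit_of_kernels
    (X : Type*) [MeasurableSpace X]
    (r : ∀ n : ℕ, SymPow (X ⊕ PUnit) n → SymPow (X ⊕ PUnit) (n + 1))
    (hr : ∀ (n : ℕ) (x : Fin n → X ⊕ PUnit),
      r n (Quotient.mk (symSetoid (X ⊕ PUnit) n) x) =
        Quotient.mk (symSetoid (X ⊕ PUnit) (n + 1)) (Fin.snoc x (Sum.inr PUnit.unit)))
    (h : ∀ n : ℕ, SymPow (X ⊕ PUnit) n → Σ k : ℕ, SymPow X k)
    (hh : ∀ (n k : ℕ) (hk : k ≤ n) (y : Fin k → X),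
      h n (Quotient.mk (symSetoid (X ⊕ PUnit) n)
          (fun i : Fin n =>
            if hi : (i : ℕ) < k then Sum.inl (y ⟨i, hi⟩) else Sum.inr PUnit.unit)) =
        ⟨k, Quotient.mk (symSetoid X k) y⟩)
    (Y : Type*) [MeasurableSpace Y]
    (τn : ∀ n : ℕ, Kernel (SymPow (X ⊕ PUnit) n) Y)
    [∀ n, IsSFiniteKernel (τn n)]
    (hcone : ∀ (n : ℕ) (m : SymPow (X ⊕ PUnit) n), τn (n + 1) (r n m) = τn n m) :
    (∀ n, Measurable (r n)) ∧ (∀ n, Measurable (h n)) ∧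
      (∃! τ : Kernel (Σ k : ℕ, SymPow X k) Y,
        ∀ (n : ℕ) (m : SymPow (X ⊕ PUnit) n), τ (h n m) = τn n m) ∧
      ∀ τ : Kernel (Σ k : ℕ, SymPow X k) Y,
        (∀ (n : ℕ) (m : SymPow (X ⊕ PUnit) n), τ (h n m) = τn n m) →
        IsSFiniteKernel τ := by
  have hr_meas (n : ℕ) : Measurable (r n) := by
    refine SymPow.measurable_iff.mpr ?_
    simp only [hr]
    exact (SymPow.measurable_mk _).comp (measurable_finSnoc _)
  have hh' : ∀ n, ∀ k ≤ n, ∀ y : Fin k → X,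
      h n (Quotient.mk _ (rootPadded n y)) = ⟨k, Quotient.mk _ y⟩ := hh
  have hcone' (n : ℕ) (x : Fin n → X ⊕ PUnit) :
      τn (n + 1) (Quotient.mk _ (Fin.snoc x (Sum.inr PUnit.unit))) = τn n (Quotient.mk _ x) := by
    rw [← hr]
    exact hcone n _
  let τ := Kernel.sigma fun k =>
    (τn k).comap (SymPow.map Sum.inl k) (SymPow.measurable_map measurable_inl k)
  have hτ (n : ℕ) (m : SymPow (X ⊕ PUnit) n) : τ (h n m) = τn n m := by
    induction m using Quotient.inductionOn with | h x => ?_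
    obtain ⟨k, hk, y, hxy⟩ := exists_symMk_eq_rootPadded x
    rw [hxy, hh' n k hk y, apply_rootPadded_of_snoc_root (fun n m => τn n m) hcone' hk y]
    rfl
  have huniq (τ' : Kernel (Σ k : ℕ, SymPow X k) Y)
      (hτ' : ∀ (n : ℕ) (m : SymPow (X ⊕ PUnit) n), τ' (h n m) = τn n m) : τ' = τ := by
    ext1 ⟨k, m⟩
    induction m using Quotient.inductionOn with | h y => ?_
    rw [← hh' k k le_rfl y]
    exact (hτ' k _).trans (hτ k _).symm
  exact ⟨hr_meas, fun n => measurable_of_apply_rootPadded (hh' n), ⟨τ, hτ, huniq⟩,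
    fun τ' hτ' => huniq τ' hτ' ▸ inferInstance⟩
end

section
/- Let X be a measurable space, n ∈ ℕ, and F a set of measurable functions X → [0,∞] with F = F°° (polar among s-finite measures on X). Then the following three subsets of the measurable functions on the symmetric power X^{(n)} have the same double polar: ({ eq\h | h ∈ (F^{⊗n})°° and h symmetric })°° = ({ eq\(s_n(g)) | g ∈ (F^{⊗n})°° })°° = ({ eq\(s_n(f_1⊗⋯⊗f_n)) | all f_i ∈ F })°°, where the inner polars (F^{⊗n})°° are taken on Fin n → X and the outer double polars on X^{(n)}, all with respect to s-finite measures. -/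
open MeasureTheory
open scoped ENNReal

/-- The polar of a set of `[0,∞]`-valued functions on `W`: the s-finite measures
integrating every member to at most `1`. -/
def funPolar {W : Type*} [MeasurableSpace W] (G : Set (W → ℝ≥0∞)) : Set (Measure W) :=
  {μ | SFinite μ ∧ ∀ g ∈ G, ∫⁻ w, g w ∂μ ≤ 1}

/-- The polar of a set of measures on `W`: the measurable `[0,∞]`-valued functions
integrating to at most `1` against every member. -/
def measPolar {W : Type*} [MeasurableSpace W] (M : Set (Measure W)) : Set (W → ℝ≥0∞) :=
  {f | Measurable f ∧ ∀ μ ∈ M, ∫⁻ w, f w ∂μ ≤ 1}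

/-- Double polar of a set of functions. -/
def biPolar {W : Type*} [MeasurableSpace W] (G : Set (W → ℝ≥0∞)) : Set (W → ℝ≥0∞) :=
  measPolar (funPolar G)

/-- `F^{⊗n} = { f₁ ⊗ ⋯ ⊗ fₙ | all fᵢ ∈ F }`, where
`(f₁ ⊗ ⋯ ⊗ fₙ)(x) = ∏ i, fᵢ (x i)` on `Fin n → X`. -/
def tensorPow {X : Type*} (F : Set (X → ℝ≥0∞)) (n : ℕ) : Set ((Fin n → X) → ℝ≥0∞) :=
  {g | ∃ f : Fin n → X → ℝ≥0∞, (∀ i, f i ∈ F) ∧ g = fun x => ∏ i, f i (x i)}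

/-- The barycentre `s_n(g)(x) = (n!)⁻¹ Σ_{σ ∈ Perm (Fin n)} g (x ∘ σ)`. -/
noncomputable def bary {X : Type*} (n : ℕ) (g : (Fin n → X) → ℝ≥0∞) :
    (Fin n → X) → ℝ≥0∞ :=
  fun x => (n.factorial : ℝ≥0∞)⁻¹ * ∑ σ : Equiv.Perm (Fin n), g (x ∘ σ)


/-!
Since `F^{⊗n}` is permutation invariant, so is `(F^{⊗n})°°`, which is also convex, hence closed
under `s_n`; this gives the inclusions of the generating sets, from the third to the first.
Conversely, the uniform probability measures on the orbits of `Fin n → X` form a Markov kernel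
`X^{(n)} → Fin n → X` against which integrating `g` yields the descent of `s_n(g)`. Lifting a
measure `ν` on `X^{(n)}` through this kernel turns `ν ∈ (third set)°` into
`lift ν ∈ (F^{⊗n})°`, and a symmetric `h ∈ (F^{⊗n})°°` integrates against `lift ν` exactly as
its descent does against `ν`, so `ν ∈ (first set)°`. Hence the three sets have the same polar.
-/

open ProbabilityTheory

section Polar

variable {W : Type*} [MeasurableSpace W]

theorem funPolar_anti {S T : Set (W → ℝ≥0∞)} (h : S ⊆ T) : funPolar T ⊆ funPolar S :=
  fun _ hμ => ⟨hμ.1, fun g hg => hμ.2 g (h hg)⟩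

theorem subset_biPolar {S : Set (W → ℝ≥0∞)} (hS : ∀ s ∈ S, Measurable s) : S ⊆ biPolar S :=
  fun s hs => ⟨hS s hs, fun _ hμ => hμ.2 s hs⟩

theorem biPolar_eq_of_funPolar_subset {A B C : Set (W → ℝ≥0∞)} (hCB : C ⊆ B) (hBA : B ⊆ A)
    (hCA : funPolar C ⊆ funPolar A) : biPolar A = biPolar B ∧ biPolar B = biPolar C := by
  have hB : funPolar B = funPolar C :=
    (funPolar_anti hCB).antisymm (hCA.trans (funPolar_anti hBA))
  have hA : funPolar A = funPolar C := (funPolar_anti (hCB.trans hBA)).antisymm hCA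
  exact ⟨by rw [biPolar, biPolar, hA, hB], by rw [biPolar, biPolar, hB]⟩

/-- The polar is taken among s-finite measures, which are stable under push-forward. -/
theorem comp_mem_biPolar {S : Set (W → ℝ≥0∞)} {φ : W → W} (hφ : Measurable φ)
    (hS : ∀ s ∈ S, s ∘ φ ∈ S) {g : W → ℝ≥0∞} (hg : g ∈ biPolar S) : g ∘ φ ∈ biPolar S := by
  refine ⟨hg.1.comp hφ, fun μ hμ => ?_⟩
  have : SFinite μ := hμ.1
  have hmap : μ.map φ ∈ funPolar S :=
    ⟨inferInstance, fun s hs => (lintegral_map_le s φ).trans (hμ.2 _ (hS s hs))⟩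
  calc ∫⁻ w, g (φ w) ∂μ = ∫⁻ w, g w ∂μ.map φ := (lintegral_map hg.1 hφ).symm
    _ ≤ 1 := hg.2 _ hmap

end Polar

section Barycentre

variable {X : Type*} {n : ℕ}

theorem inv_factorial_smul_sum_const {M : Type*} [AddCommMonoid M] [Module ℝ≥0∞ M] (c : M) :
    (n.factorial : ℝ≥0∞)⁻¹ • ∑ _σ : Equiv.Perm (Fin n), c = c := by
  rw [Finset.sum_const, Finset.card_univ, Fintype.card_perm, Fintype.card_fin,
    ← Nat.cast_smul_eq_nsmul ℝ≥0∞, smul_smul,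
    ENNReal.inv_mul_cancel (by exact_mod_cast n.factorial_ne_zero) (by simp), one_smul]

theorem bary_comp_perm (g : (Fin n → X) → ℝ≥0∞) (σ : Equiv.Perm (Fin n)) (x : Fin n → X) :
    bary n g (x ∘ σ) = bary n g x := by
  simp only [bary]
  congr 1
  simpa [Function.comp_assoc] using
    Equiv.sum_comp (Equiv.mulLeft σ) (fun τ : Equiv.Perm (Fin n) => g (x ∘ τ))

theorem bary_eq_self {h : (Fin n → X) → ℝ≥0∞}
    (hsym : ∀ (σ : Equiv.Perm (Fin n)) (x : Fin n → X), h (x ∘ σ) = h x) : bary n h = h := by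
  funext x
  simp only [bary, hsym]
  exact inv_factorial_smul_sum_const (h x)

variable [MeasurableSpace X]

theorem measurable_comp_perm (σ : Equiv.Perm (Fin n)) :
    Measurable fun x : Fin n → X => x ∘ σ :=
  measurable_pi_lambda _ fun _ => measurable_pi_apply _

theorem Measurable.bary {g : (Fin n → X) → ℝ≥0∞} (hg : Measurable g) : Measurable (bary n g) :=
  (Finset.measurable_sum _ fun σ _ => hg.comp (measurable_comp_perm σ)).const_mul _

theorem bary_mem_biPolar {S : Set ((Fin n → X) → ℝ≥0∞)}
    (hS : ∀ s ∈ S, ∀ σ : Equiv.Perm (Fin n), (fun x => s (x ∘ σ)) ∈ S)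
    {g : (Fin n → X) → ℝ≥0∞} (hg : g ∈ biPolar S) : bary n g ∈ biPolar S := by
  have hperm (σ : Equiv.Perm (Fin n)) : (fun x => g (x ∘ σ)) ∈ biPolar S :=
    comp_mem_biPolar (measurable_comp_perm σ) (fun s hs => hS s hs σ) hg
  refine ⟨hg.1.bary, fun μ hμ => ?_⟩
  calc ∫⁻ x, bary n g x ∂μ
      = (n.factorial : ℝ≥0∞)⁻¹ * ∑ σ : Equiv.Perm (Fin n), ∫⁻ x, g (x ∘ σ) ∂μ := by
        unfold bary
        rw [lintegral_const_mul _ (Finset.measurable_sum _ fun σ _ => (hperm σ).1),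
          lintegral_finsetSum _ fun σ _ => (hperm σ).1]
    _ ≤ (n.factorial : ℝ≥0∞)⁻¹ * ∑ _σ : Equiv.Perm (Fin n), 1 := by
        gcongr with σ
        exact (hperm σ).2 μ hμ
    _ = 1 := inv_factorial_smul_sum_const (1 : ℝ≥0∞)

end Barycentre

section OrbitKernel

variable {X : Type*} [MeasurableSpace X] {n : ℕ}

theorem SymPow.measurable_of_comp_mk {β : Type*} [MeasurableSpace β] {g : SymPow X n → β}
    (h : Measurable (g ∘ Quotient.mk (symSetoid X n))) : Measurable g :=
  measurable_from_quotient.mpr h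

noncomputable def orbitMeasure (x : Fin n → X) : Measure (Fin n → X) :=
  (n.factorial : ℝ≥0∞)⁻¹ • ∑ σ : Equiv.Perm (Fin n), Measure.dirac (x ∘ σ)

theorem orbitMeasure_comp_perm (x : Fin n → X) (τ : Equiv.Perm (Fin n)) :
    orbitMeasure (x ∘ τ) = orbitMeasure x := by
  simp only [orbitMeasure]
  congr 1
  simpa [Function.comp_assoc] using
    Equiv.sum_comp (Equiv.mulLeft τ) (fun σ : Equiv.Perm (Fin n) => Measure.dirac (x ∘ σ))

theorem lintegral_orbitMeasure {f : (Fin n → X) → ℝ≥0∞} (hf : Measurable f) (x : Fin n → X) :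
    ∫⁻ y, f y ∂orbitMeasure x = bary n f x := by
  rw [orbitMeasure, lintegral_smul_measure, lintegral_finsetSum_measure]
  simp only [lintegral_dirac' _ hf, bary, smul_eq_mul]

theorem orbitMeasure_apply {U : Set (Fin n → X)} (hU : MeasurableSet U) (x : Fin n → X) :
    orbitMeasure x U = bary n (U.indicator 1) x := by
  rw [← lintegral_orbitMeasure (measurable_one.indicator hU), lintegral_indicator_one hU]

instance (x : Fin n → X) : IsProbabilityMeasure (orbitMeasure x) :=
  ⟨by
    rw [orbitMeasure_apply MeasurableSet.univ, Set.indicator_univ, bary_eq_self fun _ _ => rfl]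
    rfl⟩

noncomputable def orbitKernel : Kernel (SymPow X n) (Fin n → X) where
  toFun := Quotient.lift orbitMeasure fun x _ ⟨τ, hxy⟩ => hxy ▸ (orbitMeasure_comp_perm x τ).symm
  measurable' := Measure.measurable_of_measurable_coe _ fun _ hU =>
    SymPow.measurable_of_comp_mk <| by
      convert (measurable_one.indicator hU).bary using 1
      exact funext (orbitMeasure_apply hU)

theorem orbitKernel_mk (x : Fin n → X) :
    orbitKernel (Quotient.mk (symSetoid X n) x) = orbitMeasure x := rfl

instance : IsMarkovKernel (orbitKernel : Kernel (SymPow X n) (Fin n → X)) :=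
  ⟨fun w => Quotient.inductionOn w fun x => by rw [orbitKernel_mk]; infer_instance⟩

theorem lintegral_comp_orbitKernel {h : (Fin n → X) → ℝ≥0∞} (hh : Measurable h)
    {G : SymPow X n → ℝ≥0∞} (hG : ∀ x, G (Quotient.mk (symSetoid X n) x) = bary n h x)
    (ν : Measure (SymPow X n)) : ∫⁻ y, h y ∂(orbitKernel ∘ₘ ν) = ∫⁻ w, G w ∂ν := by
  rw [Measure.lintegral_bind orbitKernel.aemeasurable hh.aemeasurable]
  refine lintegral_congr fun w => Quotient.inductionOn w fun x => ?_
  rw [orbitKernel_mk, lintegral_orbitMeasure hh, hG]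

end OrbitKernel

section Descents

variable {X : Type*} {n : ℕ}

def symDescents (H : Set ((Fin n → X) → ℝ≥0∞)) : Set (SymPow X n → ℝ≥0∞) :=
  {G | ∃ h ∈ H, (∀ (σ : Equiv.Perm (Fin n)) (x : Fin n → X), h (x ∘ σ) = h x) ∧
    ∀ x : Fin n → X, G (Quotient.mk (symSetoid X n) x) = h x}

def baryDescents (H : Set ((Fin n → X) → ℝ≥0∞)) : Set (SymPow X n → ℝ≥0∞) :=
  {G | ∃ g ∈ H, ∀ x : Fin n → X, G (Quotient.mk (symSetoid X n) x) = bary n g x}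

theorem baryDescents_mono {H K : Set ((Fin n → X) → ℝ≥0∞)} (hHK : H ⊆ K) :
    baryDescents H ⊆ baryDescents K :=
  fun _ ⟨g, hg, hG⟩ => ⟨g, hHK hg, hG⟩

theorem baryDescents_subset_symDescents {H : Set ((Fin n → X) → ℝ≥0∞)}
    (hH : ∀ g ∈ H, bary n g ∈ H) : baryDescents H ⊆ symDescents H :=
  fun _ ⟨g, hg, hG⟩ => ⟨bary n g, hH g hg, bary_comp_perm g, hG⟩

variable [MeasurableSpace X]

theorem comp_orbitKernel_mem_funPolar {T : Set ((Fin n → X) → ℝ≥0∞)}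
    (hT : ∀ t ∈ T, Measurable t) {ν : Measure (SymPow X n)}
    (hν : ν ∈ funPolar (baryDescents T)) : orbitKernel ∘ₘ ν ∈ funPolar T := by
  have : SFinite ν := hν.1
  refine ⟨inferInstance, fun t ht => ?_⟩
  obtain ⟨G, hG⟩ : ∃ G : SymPow X n → ℝ≥0∞, ∀ x, G (Quotient.mk _ x) = bary n t x :=
    ⟨Quotient.lift (bary n t) fun x _ ⟨σ, hxy⟩ => hxy ▸ (bary_comp_perm t σ x).symm,
      fun _ => rfl⟩
  rw [lintegral_comp_orbitKernel (hT t ht) hG]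
  exact hν.2 G ⟨t, ht, hG⟩

theorem funPolar_baryDescents_subset {T : Set ((Fin n → X) → ℝ≥0∞)}
    (hT : ∀ t ∈ T, Measurable t) :
    funPolar (baryDescents T) ⊆ funPolar (symDescents (biPolar T)) := by
  refine fun ν hν => ⟨hν.1, ?_⟩
  rintro G ⟨h, hh, hsym, hG⟩
  rw [← lintegral_comp_orbitKernel hh.1 (by rwa [bary_eq_self hsym])]
  exact hh.2 _ (comp_orbitKernel_mem_funPolar hT hν)

end Descents

section TensorPow

variable {X : Type*} {n : ℕ} {F : Set (X → ℝ≥0∞)}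

theorem measurable_of_mem_tensorPow [MeasurableSpace X] (hF : ∀ f ∈ F, Measurable f)
    {t : (Fin n → X) → ℝ≥0∞} (ht : t ∈ tensorPow F n) : Measurable t := by
  obtain ⟨f, hf, rfl⟩ := ht
  exact Finset.measurable_prod _ fun i _ => (hF _ (hf i)).comp (measurable_pi_apply i)

theorem comp_perm_mem_tensorPow {t : (Fin n → X) → ℝ≥0∞} (ht : t ∈ tensorPow F n)
    (σ : Equiv.Perm (Fin n)) : (fun x => t (x ∘ σ)) ∈ tensorPow F n := by
  obtain ⟨f, hf, rfl⟩ := ht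
  refine ⟨fun j => f (σ.symm j), fun j => hf _, funext fun x => ?_⟩
  simpa using Equiv.prod_comp σ fun j => f (σ.symm j) (x j)

theorem baryDescents_tensorPow :
    baryDescents (tensorPow F n) = {G : SymPow X n → ℝ≥0∞ | ∃ f : Fin n → X → ℝ≥0∞,
      (∀ i, f i ∈ F) ∧ ∀ x : Fin n → X, G (Quotient.mk (symSetoid X n) x) =
        bary n (fun y => ∏ i, f i (y i)) x} := by
  ext G
  constructor
  · rintro ⟨_, ⟨f, hf, rfl⟩, hG⟩
    exact ⟨f, hf, hG⟩
  · rintro ⟨f, hf, hG⟩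
    exact ⟨_, ⟨f, hf, rfl⟩, hG⟩

end TensorPow

theorem biPolar_descent_generators_eq_general
    {X : Type*} [MeasurableSpace X] (n : ℕ) (F : Set (X → ℝ≥0∞))
    (hF : ∀ f ∈ F, Measurable f) :
    biPolar {G : SymPow X n → ℝ≥0∞ | ∃ h, h ∈ biPolar (tensorPow F n) ∧
          (∀ (σ : Equiv.Perm (Fin n)) (x : Fin n → X), h (x ∘ σ) = h x) ∧
          ∀ x : Fin n → X, G (Quotient.mk (symSetoid X n) x) = h x} =
        biPolar {G : SymPow X n → ℝ≥0∞ | ∃ g, g ∈ biPolar (tensorPow F n) ∧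
          ∀ x : Fin n → X, G (Quotient.mk (symSetoid X n) x) = bary n g x} ∧
      biPolar {G : SymPow X n → ℝ≥0∞ | ∃ g, g ∈ biPolar (tensorPow F n) ∧
          ∀ x : Fin n → X, G (Quotient.mk (symSetoid X n) x) = bary n g x} =
        biPolar {G : SymPow X n → ℝ≥0∞ | ∃ f : Fin n → X → ℝ≥0∞, (∀ i, f i ∈ F) ∧
          ∀ x : Fin n → X, G (Quotient.mk (symSetoid X n) x) =
            bary n (fun y => ∏ i, f i (y i)) x} := by
  have hT : ∀ t ∈ tensorPow F n, Measurable t := fun _ => measurable_of_mem_tensorPow hF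
  rw [← baryDescents_tensorPow]
  exact biPolar_eq_of_funPolar_subset (baryDescents_mono (subset_biPolar hT))
    (baryDescents_subset_symDescents fun _ => bary_mem_biPolar fun _ => comp_perm_mem_tensorPow)
    (funPolar_baryDescents_subset hT)

/-- for `F = F°°`, the three generating sets of functions on the symmetric
power `X^{(n)}` — descents of symmetric members of `(F^{⊗n})°°`, descents of barycentres
of members of `(F^{⊗n})°°`, and descents of barycentres of pure tensors of members of `F`
— have the same double polar. -/
theorem biPolar_descent_generators_eq
    {X : Type*} [MeasurableSpace X] (n : ℕ) (F : Set (X → ℝ≥0∞))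
    (hF : ∀ f ∈ F, Measurable f) (hFdd : biPolar F = F) :
    biPolar {G : SymPow X n → ℝ≥0∞ | ∃ h, h ∈ biPolar (tensorPow F n) ∧
          (∀ (σ : Equiv.Perm (Fin n)) (x : Fin n → X), h (x ∘ σ) = h x) ∧
          ∀ x : Fin n → X, G (Quotient.mk (symSetoid X n) x) = h x} =
        biPolar {G : SymPow X n → ℝ≥0∞ | ∃ g, g ∈ biPolar (tensorPow F n) ∧
          ∀ x : Fin n → X, G (Quotient.mk (symSetoid X n) x) = bary n g x} ∧
      biPolar {G : SymPow X n → ℝ≥0∞ | ∃ g, g ∈ biPolar (tensorPow F n) ∧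
          ∀ x : Fin n → X, G (Quotient.mk (symSetoid X n) x) = bary n g x} =
        biPolar {G : SymPow X n → ℝ≥0∞ | ∃ f : Fin n → X → ℝ≥0∞, (∀ i, f i ∈ F) ∧
          ∀ x : Fin n → X, G (Quotient.mk (symSetoid X n) x) =
            bary n (fun y => ∏ i, f i (y i)) x} :=
  biPolar_descent_generators_eq_general n F hF
end
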